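/- arXiv:1309.6009 — 4 statements merged into one kernel-verified Lean document; each statement's English description precedes it below -/
import Mathlib

section
/- The piecewise linear map τ₁ on [0,1] defined by τ₁(x) = (4/3)x for 0 ≤ x < 3/8, τ₁(x) = 4x − 1 for 3/8 ≤ x < 1/2, τ₁(x) = −4x + 3 for 1/2 ≤ x < 5/8, and τ₁(x) = −(4/3)x + 4/3 for 5/8 ≤ x ≤ 1 preserves the absolutely continuous measure with density f₁ = (3/2)·χ_{[0,1/2]} + (1/2)·χ_{[1/2,1]}, i.e., for every measurable set A ⊆ [0,1], ∫_{τ₁⁻¹(A)} f₁ dλ = ∫_A f₁ dλ where λ is Lebesgue measure. -/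
/-!
On each of the four open pieces `(0, 3/8)`, `(3/8, 1/2)`, `(1/2, 5/8)`, `(5/8, 1)` the map `τ₁` is
affine and `f₁` is constant, so the `f₁`-mass of the part of `τ₁⁻¹ A` in a piece is the Lebesgue
measure of `A` inside the image interval, times `f₁ / |τ₁'|` on that piece. Two branches cover
`(0, 1/2)`, with weights `3/2 · 3/4 + 1/2 · 3/4 = 3/2`, and two cover `(1/2, 1)`, with weights
`3/2 · 1/4 + 1/2 · 1/4 = 1/2`: these are the values of `f₁`, i.e. `f₁` is a fixed point of the
transfer operator. The finitely many break points are null sets.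
-/

open MeasureTheory Set ENNReal

noncomputable section

/-- The lower piecewise linear map τ₁ of the motivating example. -/
def tau1 : ℝ → ℝ := fun x =>
  if x < 3/8 then (4/3) * x
  else if x < 1/2 then 4 * x - 1
  else if x < 5/8 then -4 * x + 3
  else -(4/3) * x + 4/3

/-- The invariant density f₁ = (3/2)·χ_{[0,1/2]} + (1/2)·χ_{(1/2,1]}. -/
def dens1 : ℝ → ℝ≥0∞ := fun x => if x ≤ 1/2 then 3/2 else 1/2

lemma setLIntegral_eq_const_mul {α : Type*} [MeasurableSpace α] {μ : Measure α}
    {d : α → ℝ≥0∞} {c : ℝ≥0∞} {s : Set α} (hs : MeasurableSet s) (hd : EqOn d (fun _ => c) s) :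
    ∫⁻ x in s, d x ∂μ = c * μ s := by
  rw [setLIntegral_congr_fun hs hd, setLIntegral_const]

lemma setLIntegral_Ioo_inter_eq_add {μ : Measure ℝ} [NullSingletonClass μ] (f : ℝ → ℝ≥0∞)
    (S : Set ℝ) (a b c : ℝ) (hab : a ≤ b) (hbc : b ≤ c) :
    ∫⁻ x in Ioo a c ∩ S, f x ∂μ =
      ∫⁻ x in Ioo a b ∩ S, f x ∂μ + ∫⁻ x in Ioo b c ∩ S, f x ∂μ := by
  simp only [← Measure.restrict_restrict measurableSet_Ioo, setLIntegral_congr Ioo_ae_eq_Ioc]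
  rw [← Ioc_union_Ioc_eq_Ioc hab hbc,
    lintegral_union measurableSet_Ioc (Ioc_disjoint_Ioc_of_le le_rfl)]

lemma setLIntegral_Icc_inter_eq_Ioo_inter {μ : Measure ℝ} [NullSingletonClass μ]
    (f : ℝ → ℝ≥0∞) (S : Set ℝ) (a b : ℝ) :
    ∫⁻ x in Icc a b ∩ S, f x ∂μ = ∫⁻ x in Ioo a b ∩ S, f x ∂μ :=
  setLIntegral_congr (Ioo_ae_eq_Icc.symm.inter (ae_eq_refl S))

lemma volume_preimage_affine {a : ℝ} (b : ℝ) (ha : a ≠ 0) (S : Set ℝ) :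
    volume ((fun x => a * x + b) ⁻¹' S) = ENNReal.ofReal |a⁻¹| * volume S := by
  change volume ((a * ·) ⁻¹' ((· + b) ⁻¹' S)) = _
  rw [Real.volume_preimage_mul_left ha, measure_preimage_add_right]

lemma setLIntegral_inter_preimage_of_eqOn_affine {f : ℝ → ℝ} {d : ℝ → ℝ≥0∞} {a b : ℝ}
    {c : ℝ≥0∞} {I J A : Set ℝ} (ha : a ≠ 0) (hJ : MeasurableSet J) (hA : MeasurableSet A)
    (hIJ : (fun x => a * x + b) ⁻¹' J = I) (hf : EqOn f (fun x => a * x + b) I)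
    (hd : EqOn d (fun _ => c) I) :
    ∫⁻ x in I ∩ f ⁻¹' A, d x = c * ENNReal.ofReal |a⁻¹| * volume (J ∩ A) := by
  have hpre : I ∩ f ⁻¹' A = (fun x => a * x + b) ⁻¹' (J ∩ A) := by
    rw [hf.inter_preimage_eq, ← hIJ, preimage_inter]
  have hmeas : MeasurableSet (I ∩ f ⁻¹' A) :=
    hpre ▸ (by fun_prop : Measurable fun x => a * x + b) (hJ.inter hA)
  rw [setLIntegral_eq_const_mul hmeas (hd.mono inter_subset_left), hpre,
    volume_preimage_affine b ha, mul_assoc]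

lemma setLIntegral_dens1_inter_preimage_tau1 {A : Set ℝ} (hA : MeasurableSet A) :
    ∫⁻ x in Icc 0 1 ∩ tau1 ⁻¹' A, dens1 x =
      (3/2 * ENNReal.ofReal |(4/3 : ℝ)⁻¹| + 1/2 * ENNReal.ofReal |(-(4/3) : ℝ)⁻¹|)
          * volume (Ioo 0 (1/2) ∩ A)
        + (3/2 * ENNReal.ofReal |(4 : ℝ)⁻¹| + 1/2 * ENNReal.ofReal |(-4 : ℝ)⁻¹|)
          * volume (Ioo (1/2) 1 ∩ A) := by
  have preimage_Ioo {a b p q p' q' : ℝ}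
      (h : ∀ x, p' < a * x + b ∧ a * x + b < q' ↔ p < x ∧ x < q) :
      (fun x => a * x + b) ⁻¹' Ioo p' q' = Ioo p q := ext h
  rw [setLIntegral_Icc_inter_eq_Ioo_inter,
    setLIntegral_Ioo_inter_eq_add _ _ 0 (1/2) 1 (by norm_num) (by norm_num),
    setLIntegral_Ioo_inter_eq_add _ _ 0 (3/8) (1/2) (by norm_num) (by norm_num),
    setLIntegral_Ioo_inter_eq_add _ _ (1/2) (5/8) 1 (by norm_num) (by norm_num),
    setLIntegral_inter_preimage_of_eqOn_affine (a := 4/3) (b := 0) (c := 3/2)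
      (J := Ioo 0 (1/2)) (by norm_num) measurableSet_Ioo hA
      (preimage_Ioo fun x => by constructor <;> intro ⟨_, _⟩ <;> constructor <;> linarith)
      (fun x ⟨_, h⟩ => by simp only [tau1, if_pos h]; ring)
      (fun x ⟨_, h⟩ => by simp only [dens1, if_pos (show x ≤ 1/2 by linarith)]),
    setLIntegral_inter_preimage_of_eqOn_affine (a := 4) (b := -1) (c := 3/2)
      (J := Ioo (1/2) 1) (by norm_num) measurableSet_Ioo hA
      (preimage_Ioo fun x => by constructor <;> intro ⟨_, _⟩ <;> constructor <;> linarith)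
      (fun x ⟨h, h'⟩ => by simp only [tau1, if_neg (not_lt.mpr h.le), if_pos h']; ring)
      (fun x ⟨_, h⟩ => by simp only [dens1, if_pos h.le]),
    setLIntegral_inter_preimage_of_eqOn_affine (a := -4) (b := 3) (c := 1/2)
      (J := Ioo (1/2) 1) (by norm_num) measurableSet_Ioo hA
      (preimage_Ioo fun x => by constructor <;> intro ⟨_, _⟩ <;> constructor <;> linarith)
      (fun x ⟨h, h'⟩ => by
        simp only [tau1, if_neg (show ¬x < 3/8 by linarith), if_neg (not_lt.mpr h.le), if_pos h'])
      (fun x ⟨h, _⟩ => by simp only [dens1, if_neg (not_le.mpr h)]),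
    setLIntegral_inter_preimage_of_eqOn_affine (a := -(4/3)) (b := 4/3) (c := 1/2)
      (J := Ioo 0 (1/2)) (by norm_num) measurableSet_Ioo hA
      (preimage_Ioo fun x => by constructor <;> intro ⟨_, _⟩ <;> constructor <;> linarith)
      (fun x ⟨h, _⟩ => by
        simp only [tau1, if_neg (show ¬x < 3/8 by linarith), if_neg (show ¬x < 1/2 by linarith),
          if_neg (not_lt.mpr h.le)])
      (fun x ⟨h, _⟩ => by simp only [dens1, if_neg (show ¬x ≤ 1/2 by linarith)])]
  ring

lemma setLIntegral_dens1_of_subset_Icc {A : Set ℝ} (hA : MeasurableSet A)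
    (hA01 : A ⊆ Icc 0 1) :
    ∫⁻ x in A, dens1 x = 3/2 * volume (Ioo 0 (1/2) ∩ A) + 1/2 * volume (Ioo (1/2) 1 ∩ A) := by
  conv_lhs => rw [← inter_eq_right.mpr hA01]
  rw [setLIntegral_Icc_inter_eq_Ioo_inter,
    setLIntegral_Ioo_inter_eq_add _ _ 0 (1/2) 1 (by norm_num) (by norm_num),
    setLIntegral_eq_const_mul (c := 3/2) (measurableSet_Ioo.inter hA)
      (fun x ⟨⟨_, h⟩, _⟩ => by simp only [dens1, if_pos h.le]),
    setLIntegral_eq_const_mul (c := 1/2) (measurableSet_Ioo.inter hA)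
      (fun x ⟨⟨h, _⟩, _⟩ => by simp only [dens1, if_neg (not_le.mpr h)])]

/-- τ₁ preserves the absolutely continuous measure with density f₁. -/
theorem stmt0 :
    ∀ A : Set ℝ, MeasurableSet A → A ⊆ Set.Icc (0:ℝ) 1 →
      ∫⁻ x in Set.Icc (0:ℝ) 1 ∩ tau1 ⁻¹' A, dens1 x = ∫⁻ x in A, dens1 x := by
  intro A hA hA01
  have hleft : (3/2 : ℝ≥0∞) * ENNReal.ofReal |(4/3 : ℝ)⁻¹|
      + 1/2 * ENNReal.ofReal |(-(4/3) : ℝ)⁻¹| = 3/2 := by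
    rw [← ENNReal.toReal_eq_toReal_iff' (by finiteness) (by finiteness),
      ENNReal.toReal_add (by finiteness) (by finiteness)]
    norm_num
  have hright : (3/2 : ℝ≥0∞) * ENNReal.ofReal |(4 : ℝ)⁻¹|
      + 1/2 * ENNReal.ofReal |(-4 : ℝ)⁻¹| = 1/2 := by
    rw [← ENNReal.toReal_eq_toReal_iff' (by finiteness) (by finiteness),
      ENNReal.toReal_add (by finiteness) (by finiteness)]
    norm_num
  rw [setLIntegral_dens1_inter_preimage_tau1 hA, hleft, hright,
    setLIntegral_dens1_of_subset_Icc hA hA01]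
end
end

section
/- Let τ₁ be a piecewise linear Markov map of [0,1] onto itself with respect to a finite partition P = {I₁,…,Iₙ} of [0,1] into intervals, preserving the piecewise constant density f₁ = Σᵢ cᵢ χ_{Iᵢ} with cᵢ > 0. Let h : [0,1] → [0,1] be an absolutely continuous homeomorphism mapping each Iᵢ onto itself, and τ₂ = h⁻¹ ∘ τ₁ ∘ h. Then τ₂ preserves the density f₂ = |h'|·Σᵢ cᵢ χ_{Iᵢ}, and almost everywhere |h'| = f₂·Σᵢ (1/cᵢ) χ_{Iᵢ}. -/
open MeasureTheory Set ENNReal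

noncomputable section

/-- Proposition: if τ₁ is a piecewise linear Markov map preserving the piecewise constant
density f₁ = Σ cᵢ χ_{Iᵢ}, and τ₂ = h⁻¹ ∘ τ₁ ∘ h for an a.c. homeomorphism h preserving
the partition, then τ₂ preserves f₂ = |h'|·f₁ and |h'| = f₂ · Σ (1/cᵢ) χ_{Iᵢ}. -/
theorem stmt8 (n : ℕ) (hn : 0 < n) (a : ℕ → ℝ) (c : ℕ → ℝ)
    (ha0 : a 0 = 0) (han : a n = 1) (hamono : ∀ i < n, a i < a (i + 1))
    (hc : ∀ i < n, 0 < c i)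
    (τ₁ τ₂ h hinv : ℝ → ℝ) (h' : ℝ → ℝ) (f₁ : ℝ → ℝ)
    (hf₁ : ∀ i < n, ∀ x ∈ Set.Ico (a i) (a (i + 1)), f₁ x = c i)
    (hf₁1 : f₁ 1 = c (n - 1))
    -- τ₁ is piecewise linear
    (hlin : ∀ i < n, ∃ m b : ℝ, ∀ x ∈ Set.Icc (a i) (a (i + 1)), τ₁ x = m * x + b)
    -- τ₁ is Markov with respect to the partition: images are unions of partition intervals
    (hMarkov : ∀ i < n, ∃ k l : ℕ, k < l ∧ l ≤ n ∧
      τ₁ '' Set.Icc (a i) (a (i + 1)) = Set.Icc (a k) (a l))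
    (hmapsτ₁ : Set.MapsTo τ₁ (Set.Icc 0 1) (Set.Icc 0 1))
    -- τ₁ preserves the density f₁
    (hpres : ∀ A : Set ℝ, MeasurableSet A → A ⊆ Set.Icc (0:ℝ) 1 →
      ∫⁻ x in Set.Icc (0:ℝ) 1 ∩ τ₁ ⁻¹' A, ENNReal.ofReal (f₁ x)
        = ∫⁻ x in A, ENNReal.ofReal (f₁ x))
    -- h is an a.c. homeomorphism of [0,1] mapping each partition interval onto itself
    (hcont : ContinuousOn h (Set.Icc 0 1)) (hcontinv : ContinuousOn hinv (Set.Icc 0 1))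
    (hbij : ∀ i < n, Set.BijOn h (Set.Icc (a i) (a (i + 1))) (Set.Icc (a i) (a (i + 1))))
    (hlinv : ∀ x ∈ Set.Icc (0:ℝ) 1, hinv (h x) = x)
    (hrinv : ∀ y ∈ Set.Icc (0:ℝ) 1, h (hinv y) = y)
    -- absolute continuity of h with derivative h': change of variables formula
    (hcov : ∀ g : ℝ → ℝ≥0∞, Measurable g →
      ∫⁻ x in Set.Icc (0:ℝ) 1, g (h x) * ENNReal.ofReal |h' x| = ∫⁻ y in Set.Icc (0:ℝ) 1, g y)
    -- the conjugacy
    (hconj : ∀ x ∈ Set.Icc (0:ℝ) 1, τ₂ x = hinv (τ₁ (h x))) :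
    -- τ₂ preserves f₂ = |h'|·Σ cᵢχ_{Iᵢ} = |h'|·f₁∘h ... with f₂ x = |h' x| * f₁ (h x)
    (∀ A : Set ℝ, MeasurableSet A → A ⊆ Set.Icc (0:ℝ) 1 →
      ∫⁻ x in Set.Icc (0:ℝ) 1 ∩ τ₂ ⁻¹' A, ENNReal.ofReal (|h' x| * f₁ x)
        = ∫⁻ x in A, ENNReal.ofReal (|h' x| * f₁ x)) ∧
    -- |h'| = f₂ · Σ (1/cᵢ) χ_{Iᵢ} almost everywhere
    (∀ᵐ x ∂volume, ∀ i < n, x ∈ Set.Ico (a i) (a (i + 1)) →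
      |h' x| = (|h' x| * f₁ x) * (1 / c i)) := by
  classical
  -- monotonicity of a
  have amono : ∀ j ≤ n, ∀ i ≤ j, a i ≤ a j := by
    intro j
    induction j with
    | zero => intro _ i hi; rw [Nat.le_zero.mp hi]
    | succ k ih =>
      intro hk i hi
      rcases Nat.lt_succ_iff_lt_or_eq.mp (Nat.lt_succ_of_le hi) with hlt | heq
      · calc a i ≤ a k := ih (Nat.le_of_succ_le hk) i (Nat.lt_succ_iff.mp hlt)
          _ ≤ a (k+1) := (hamono k (Nat.lt_of_succ_le hk)).le
      · rw [heq]
  have hIccsub : ∀ i < n, Set.Icc (a i) (a (i+1)) ⊆ Set.Icc (0:ℝ) 1 := by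
    intro i hi x hx
    constructor
    · calc (0:ℝ) = a 0 := ha0.symm
        _ ≤ a i := amono i hi.le 0 (Nat.zero_le _)
        _ ≤ x := hx.1
    · calc x ≤ a (i+1) := hx.2
        _ ≤ a n := amono n le_rfl (i+1) hi
        _ = 1 := han
  -- the canonical piecewise-constant density
  set F : ℝ → ℝ := fun x => ∑ i ∈ Finset.range n,
      (Set.Ico (a i) (a (i+1))).indicator (fun _ => c i) x with hFdef
  have hFmeas : Measurable F :=
    Finset.measurable_sum _ fun i _ => Measurable.indicator measurable_const measurableSet_Ico
  have hFval : ∀ i < n, ∀ x ∈ Set.Ico (a i) (a (i+1)), F x = c i := by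
    intro i hi x hx
    rw [hFdef]
    dsimp only
    rw [Finset.sum_eq_single i]
    · exact Set.indicator_of_mem hx _
    · intro j hj hne
      apply Set.indicator_of_notMem
      intro hxj
      rcases lt_or_gt_of_ne hne with hji | hij
      · exact absurd hxj.2 (not_lt.mpr (le_trans (amono i hi.le (j+1) hji) hx.1))
      · exact absurd hx.2 (not_lt.mpr (le_trans (amono j (Finset.mem_range.mp hj).le (i+1) hij) hxj.1))
    · intro hni; exact absurd (Finset.mem_range.mpr hi) hni
  -- locating a point of [0,1) in the partition
  have hfind : ∀ x ∈ Set.Ico (0:ℝ) 1, ∃ i < n, x ∈ Set.Ico (a i) (a (i+1)) := by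
    intro x hx
    set P := fun i => a i ≤ x with hP
    set i := Nat.findGreatest P (n-1) with hidef
    have hi0 : P 0 := by rw [hP]; simpa [ha0] using hx.1
    have hiP : P i := Nat.findGreatest_spec (Nat.zero_le _) hi0
    have hile : i ≤ n - 1 := Nat.findGreatest_le _
    refine ⟨i, lt_of_le_of_lt hile (Nat.sub_lt hn one_pos), hiP, ?_⟩
    by_cases hcase : i = n - 1
    · have hsucc : n - 1 + 1 = n := by omega
      have : a (i+1) = 1 := by rw [hcase, hsucc, han]
      rw [this]; exact hx.2
    · have hlt : i + 1 ≤ n - 1 := Nat.succ_le_of_lt (lt_of_le_of_ne hile hcase)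
      have hnP := Nat.findGreatest_is_greatest (Nat.lt_succ_self i) hlt
      exact not_le.mp hnP
  have hf₁F : ∀ x ∈ Set.Ico (0:ℝ) 1, f₁ x = F x := by
    intro x hx
    obtain ⟨i, hi, hxi⟩ := hfind x hx
    rw [hf₁ i hi x hxi, hFval i hi x hxi]
  have h1null : ∀ᵐ x ∂(volume : Measure ℝ), x ≠ 1 := by
    rw [ae_iff]
    have : {x : ℝ | ¬ x ≠ 1} = {1} := by ext x; simp
    rw [this]
    exact measure_singleton 1
  have hcongr : ∀ s : Set ℝ, MeasurableSet s → s ⊆ Set.Icc (0:ℝ) 1 →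
      ∫⁻ x in s, ENNReal.ofReal (f₁ x) = ∫⁻ x in s, ENNReal.ofReal (F x) := by
    intro s hs hsub
    apply lintegral_congr_ae
    filter_upwards [ae_restrict_mem hs, ae_restrict_of_ae h1null] with x hxs hx1
    rw [hf₁F x ⟨(hsub hxs).1, lt_of_le_of_ne (hsub hxs).2 hx1⟩]
  -- bad set where h hits a right endpoint
  have hbad : ∀ᵐ x ∂(volume : Measure ℝ), ∀ i, i < n → x ∈ Set.Icc (a i) (a (i+1)) →
      h x ≠ a (i+1) := by
    rw [ae_all_iff]
    intro i
    by_cases hi : i < n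
    · have hsub : {x : ℝ | ¬ (i < n → x ∈ Set.Icc (a i) (a (i+1)) → h x ≠ a (i+1))} ⊆
          {x : ℝ | x ∈ Set.Icc (a i) (a (i+1)) ∧ h x = a (i+1)} := by
        intro x hx
        push_neg at hx
        exact ⟨hx.2.1, hx.2.2⟩
      have hss : ({x : ℝ | x ∈ Set.Icc (a i) (a (i+1)) ∧ h x = a (i+1)}).Subsingleton := by
        intro x hx y hy
        exact (hbij i hi).injOn hx.1 hy.1 (hx.2.trans hy.2.symm)
      exact ae_iff.mpr (measure_mono_null hsub (hss.measure_zero volume))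
    · exact Filter.Eventually.of_forall fun x hi' => absurd hi' hi
  have hcover : ∀ x ∈ Set.Icc (0:ℝ) 1, ∃ i < n, x ∈ Set.Icc (a i) (a (i+1)) := by
    intro x hx
    rcases lt_or_eq_of_le hx.2 with h1 | h1
    · obtain ⟨i, hi, hxi⟩ := hfind x ⟨hx.1, h1⟩
      exact ⟨i, hi, hxi.1, hxi.2.le⟩
    · refine ⟨n-1, Nat.sub_lt hn one_pos, ?_, ?_⟩
      · rw [h1, ← han]; exact amono n le_rfl (n-1) (Nat.sub_le n 1)
      · have hsucc : n - 1 + 1 = n := by omega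
        rw [hsucc, han, h1]
  have himage : Set.MapsTo h (Set.Icc (0:ℝ) 1) (Set.Icc (0:ℝ) 1) := by
    intro x hx
    obtain ⟨i, hi, hxi⟩ := hcover x hx
    exact hIccsub i hi ((hbij i hi).mapsTo hxi)
  -- measurability of preimages under continuous-on-[0,1] maps
  have hmT : ∀ φ : ℝ → ℝ, ContinuousOn φ (Set.Icc 0 1) → ∀ B : Set ℝ, MeasurableSet B →
      MeasurableSet (Set.Icc (0:ℝ) 1 ∩ φ ⁻¹' B) := by
    intro φ hφ B hB
    have h1 : Measurable (Set.restrict (Set.Icc (0:ℝ) 1) φ) :=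
      (continuousOn_iff_continuous_restrict.mp hφ).measurable
    have h2 : MeasurableSet ((Subtype.val : Set.Icc (0:ℝ) 1 → ℝ) ''
        (Set.restrict (Set.Icc (0:ℝ) 1) φ ⁻¹' B)) :=
      (MeasurableEmbedding.subtype_coe measurableSet_Icc).measurableSet_image.mpr (h1 hB)
    convert h2 using 1
    ext x
    constructor
    · rintro ⟨hx, hxB⟩
      exact ⟨⟨x, hx⟩, hxB, rfl⟩
    · rintro ⟨⟨y, hy⟩, hyB, rfl⟩
      exact ⟨hy, hyB⟩
  -- measurability of preimages under τ₁
  have hmτ : ∀ B : Set ℝ, MeasurableSet B →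
      MeasurableSet (Set.Icc (0:ℝ) 1 ∩ τ₁ ⁻¹' B) := by
    intro B hB
    have hsplit : Set.Icc (0:ℝ) 1 ∩ τ₁ ⁻¹' B
        = ⋃ i ∈ Finset.range n, (Set.Icc (a i) (a (i+1)) ∩ τ₁ ⁻¹' B) := by
      ext x
      simp only [Set.mem_inter_iff, Set.mem_iUnion, Finset.mem_range, Set.mem_preimage]
      constructor
      · rintro ⟨hx, hxB⟩
        obtain ⟨i, hi, hxi⟩ := hcover x hx
        exact ⟨i, hi, hxi, hxB⟩
      · rintro ⟨i, hi, hxi, hxB⟩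
        exact ⟨hIccsub i hi hxi, hxB⟩
    rw [hsplit]
    refine MeasurableSet.biUnion (Set.to_countable _) ?_
    intro i hi
    obtain ⟨m, b, hmb⟩ := hlin i (Finset.mem_range.mp hi)
    have heq : Set.Icc (a i) (a (i+1)) ∩ τ₁ ⁻¹' B
        = Set.Icc (a i) (a (i+1)) ∩ (fun x => m*x+b) ⁻¹' B := by
      ext x
      simp only [Set.mem_inter_iff, Set.mem_preimage]
      constructor
      · rintro ⟨hx, hxB⟩
        rw [← hmb x hx]
        exact ⟨hx, hxB⟩
      · rintro ⟨hx, hxB⟩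
        rw [hmb x hx]
        exact ⟨hx, hxB⟩
    rw [heq]
    exact measurableSet_Icc.inter (((measurable_id.const_mul m).add_const b) hB)
  -- key change of variables identity
  have key : ∀ B : Set ℝ, MeasurableSet B →
      ∫⁻ x in Set.Icc (0:ℝ) 1 ∩ h ⁻¹' B, ENNReal.ofReal (|h' x| * f₁ x)
        = ∫⁻ y in Set.Icc (0:ℝ) 1 ∩ B, ENNReal.ofReal (F y) := by
    intro B hB
    have hg : Measurable (fun y => B.indicator (fun y => ENNReal.ofReal (F y)) y) :=
      Measurable.indicator hFmeas.ennreal_ofReal hB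
    have hcv := hcov _ hg
    have hTm : MeasurableSet (Set.Icc (0:ℝ) 1 ∩ h ⁻¹' B) := hmT h hcont B hB
    have hL : ∫⁻ x in Set.Icc (0:ℝ) 1,
        B.indicator (fun y => ENNReal.ofReal (F y)) (h x) * ENNReal.ofReal |h' x|
          = ∫⁻ x in Set.Icc (0:ℝ) 1 ∩ h ⁻¹' B, ENNReal.ofReal (|h' x| * f₁ x) := by
      have hae : ∀ᵐ x ∂(volume.restrict (Set.Icc (0:ℝ) 1)),
          B.indicator (fun y => ENNReal.ofReal (F y)) (h x) * ENNReal.ofReal |h' x|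
            = (Set.Icc (0:ℝ) 1 ∩ h ⁻¹' B).indicator
                (fun x => ENNReal.ofReal (|h' x| * f₁ x)) x := by
        filter_upwards [ae_restrict_mem measurableSet_Icc, ae_restrict_of_ae h1null,
          ae_restrict_of_ae hbad] with x hxI hx1 hxbad
        have hxIco : x ∈ Set.Ico (0:ℝ) 1 := ⟨hxI.1, lt_of_le_of_ne hxI.2 hx1⟩
        obtain ⟨i, hi, hxi⟩ := hfind x hxIco
        have hhx : h x ∈ Set.Ico (a i) (a (i+1)) := by
          have hmem : h x ∈ Set.Icc (a i) (a (i+1)) := (hbij i hi).mapsTo ⟨hxi.1, hxi.2.le⟩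
          exact ⟨hmem.1, lt_of_le_of_ne hmem.2 (hxbad i hi ⟨hxi.1, hxi.2.le⟩)⟩
        have hFh : F (h x) = F x := by rw [hFval i hi _ hhx, hFval i hi x hxi]
        have hfx : f₁ x = F x := hf₁F x hxIco
        by_cases hxB : h x ∈ B
        · have hxT : x ∈ Set.Icc (0:ℝ) 1 ∩ h ⁻¹' B := ⟨hxI, hxB⟩
          rw [Set.indicator_of_mem hxB, Set.indicator_of_mem hxT,
            ENNReal.ofReal_mul (abs_nonneg _), hfx, hFh, mul_comm]
        · have hxT : x ∉ Set.Icc (0:ℝ) 1 ∩ h ⁻¹' B := fun hmem => hxB hmem.2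
          rw [Set.indicator_of_notMem hxB, Set.indicator_of_notMem hxT, zero_mul]
      rw [lintegral_congr_ae hae, lintegral_indicator hTm,
        Measure.restrict_restrict hTm,
        Set.inter_eq_left.mpr Set.inter_subset_left]
    have hR : ∫⁻ y in Set.Icc (0:ℝ) 1, B.indicator (fun y => ENNReal.ofReal (F y)) y
        = ∫⁻ y in Set.Icc (0:ℝ) 1 ∩ B, ENNReal.ofReal (F y) := by
      rw [lintegral_indicator hB, Measure.restrict_restrict hB, Set.inter_comm]
    rw [← hL, hcv, hR]
  constructor
  · intro A hA hAsub
    set A' := Set.Icc (0:ℝ) 1 ∩ hinv ⁻¹' A with hA'def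
    have hA'm : MeasurableSet A' := hmT hinv hcontinv A hA
    have hA'sub : A' ⊆ Set.Icc (0:ℝ) 1 := Set.inter_subset_left
    set B := Set.Icc (0:ℝ) 1 ∩ τ₁ ⁻¹' A' with hBdef
    have hBm : MeasurableSet B := hmτ A' hA'm
    have hBsub : B ⊆ Set.Icc (0:ℝ) 1 := Set.inter_subset_left
    have e1 : Set.Icc (0:ℝ) 1 ∩ τ₂ ⁻¹' A = Set.Icc (0:ℝ) 1 ∩ h ⁻¹' B := by
      ext x
      simp only [hBdef, hA'def, Set.mem_inter_iff, Set.mem_preimage]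
      constructor
      · rintro ⟨hx, hxA⟩
        have hhx := himage hx
        have hτ : τ₁ (h x) ∈ Set.Icc (0:ℝ) 1 := hmapsτ₁ hhx
        refine ⟨hx, hhx, hτ, ?_⟩
        rwa [← hconj x hx]
      · rintro ⟨hx, _, _, hmem⟩
        refine ⟨hx, ?_⟩
        rwa [hconj x hx]
    have e2 : Set.Icc (0:ℝ) 1 ∩ h ⁻¹' A' = A := by
      ext x
      simp only [hA'def, Set.mem_inter_iff, Set.mem_preimage]
      constructor
      · rintro ⟨hx, _, hxA⟩
        rwa [hlinv x hx] at hxA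
      · intro hxA
        have hx := hAsub hxA
        exact ⟨hx, himage hx, by rwa [hlinv x hx]⟩
    calc ∫⁻ x in Set.Icc (0:ℝ) 1 ∩ τ₂ ⁻¹' A, ENNReal.ofReal (|h' x| * f₁ x)
        = ∫⁻ x in Set.Icc (0:ℝ) 1 ∩ h ⁻¹' B, ENNReal.ofReal (|h' x| * f₁ x) := by rw [e1]
      _ = ∫⁻ y in Set.Icc (0:ℝ) 1 ∩ B, ENNReal.ofReal (F y) := key B hBm
      _ = ∫⁻ y in B, ENNReal.ofReal (F y) := by rw [Set.inter_eq_right.mpr hBsub]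
      _ = ∫⁻ y in B, ENNReal.ofReal (f₁ y) := (hcongr B hBm hBsub).symm
      _ = ∫⁻ y in A', ENNReal.ofReal (f₁ y) := hpres A' hA'm hA'sub
      _ = ∫⁻ y in A', ENNReal.ofReal (F y) := hcongr A' hA'm hA'sub
      _ = ∫⁻ y in Set.Icc (0:ℝ) 1 ∩ A', ENNReal.ofReal (F y) := by
          rw [Set.inter_eq_right.mpr hA'sub]
      _ = ∫⁻ x in Set.Icc (0:ℝ) 1 ∩ h ⁻¹' A', ENNReal.ofReal (|h' x| * f₁ x) :=
          (key A' hA'm).symm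
      _ = ∫⁻ x in A, ENNReal.ofReal (|h' x| * f₁ x) := by rw [e2]
  · refine Filter.Eventually.of_forall fun x i hi hx => ?_
    rw [hf₁ i hi x hx, mul_assoc, mul_one_div, div_self (hc i hi).ne', mul_one]

end
end

section
/- Let τ₁, τ₂ : [0,1] → [0,1] with τ₁ ≤ τ₂ pointwise, conjugated by an increasing homeomorphism h of [0,1] via τ₂ = h⁻¹ ∘ τ₁ ∘ h, where τ₁ is affine on each interval of a finite partition P and h maps each interval of P onto itself. For 0 < α < 1 set g(x) = αx + (1−α)h(x) and τ = g⁻¹ ∘ τ₁ ∘ g. Then τ₁(x) ≤ τ(x) ≤ τ₂(x) for all x ∈ [0,1]. -/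
open Set

noncomputable section

private lemma exists_interval_stmt9 (n : ℕ) (hn : 0 < n) (a : ℕ → ℝ)
    (ha0 : a 0 = 0) (han : a n = 1) (x : ℝ) (hx : x ∈ Set.Icc (0:ℝ) 1) :
    ∃ i < n, x ∈ Set.Icc (a i) (a (i + 1)) := by
  classical
  set P : ℕ → Prop := fun i => a i ≤ x with hP
  have hP0 : P 0 := by simp [hP, ha0, hx.1]
  set i := Nat.findGreatest P (n - 1) with hi
  have hile : i ≤ n - 1 := Nat.findGreatest_le _
  have hin : i < n := lt_of_le_of_lt hile (Nat.sub_lt hn one_pos)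
  refine ⟨i, hin, Nat.findGreatest_spec (Nat.zero_le _) hP0, ?_⟩
  rcases eq_or_lt_of_le hile with heq | hlt
  · have : i + 1 = n := by omega
    rw [this, han]; exact hx.2
  · have hnP : ¬ P (i + 1) :=
      Nat.findGreatest_is_greatest (Nat.lt_succ_self i) (by omega)
    exact le_of_not_ge hnP

/-- Theorem: if τ₂ = h⁻¹ ∘ τ₁ ∘ h with h an increasing homeomorphism preserving the
partition on which τ₁ is affine, τ₁ ≤ τ₂, and g = αid + (1−α)h, then
τ = g⁻¹ ∘ τ₁ ∘ g lies between τ₁ and τ₂. -/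
theorem stmt9 (n : ℕ) (hn : 0 < n) (a : ℕ → ℝ)
    (ha0 : a 0 = 0) (han : a n = 1) (hamono : ∀ i < n, a i < a (i + 1))
    (τ₁ τ₂ τ h hinv g ginv : ℝ → ℝ) (α : ℝ) (hα : 0 < α) (hα1 : α < 1)
    -- τ₁ is affine on each partition interval
    (haff : ∀ i < n, ∃ m b : ℝ, ∀ x ∈ Set.Icc (a i) (a (i + 1)), τ₁ x = m * x + b)
    (hmapsτ₁ : Set.MapsTo τ₁ (Set.Icc 0 1) (Set.Icc 0 1))
    -- h is an increasing homeomorphism of [0,1] mapping each partition interval onto itself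
    (hmono : StrictMonoOn h (Set.Icc 0 1)) (hcont : ContinuousOn h (Set.Icc 0 1))
    (hbij : ∀ i < n, Set.BijOn h (Set.Icc (a i) (a (i + 1))) (Set.Icc (a i) (a (i + 1))))
    (hlinv : ∀ x ∈ Set.Icc (0:ℝ) 1, hinv (h x) = x)
    (hrinv : ∀ y ∈ Set.Icc (0:ℝ) 1, h (hinv y) = y)
    (hmapsinv : Set.MapsTo hinv (Set.Icc 0 1) (Set.Icc 0 1))
    -- the conjugacy τ₂ = h⁻¹ ∘ τ₁ ∘ h, with τ₁ ≤ τ₂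
    (hconj : ∀ x ∈ Set.Icc (0:ℝ) 1, τ₂ x = hinv (τ₁ (h x)))
    (hle : ∀ x ∈ Set.Icc (0:ℝ) 1, τ₁ x ≤ τ₂ x)
    -- g = α·id + (1−α)·h and its inverse ginv on [0,1]
    (hg : ∀ x, g x = α * x + (1 - α) * h x)
    (hglinv : ∀ x ∈ Set.Icc (0:ℝ) 1, ginv (g x) = x)
    (hgrinv : ∀ y ∈ Set.Icc (0:ℝ) 1, g (ginv y) = y)
    (hmapsginv : Set.MapsTo ginv (Set.Icc 0 1) (Set.Icc 0 1))
    -- τ = g⁻¹ ∘ τ₁ ∘ g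
    (hτ : ∀ x ∈ Set.Icc (0:ℝ) 1, τ x = ginv (τ₁ (g x))) :
    ∀ x ∈ Set.Icc (0:ℝ) 1, τ₁ x ≤ τ x ∧ τ x ≤ τ₂ x := by
  -- monotonicity of the partition points
  have amono : ∀ j k : ℕ, j ≤ k → k ≤ n → a j ≤ a k := by
    intro j k hjk hkn
    induction k with
    | zero => simp [Nat.le_zero.mp hjk]
    | succ k ih =>
      rcases Nat.lt_or_ge j (k + 1) with h' | h'
      · exact le_trans (ih (Nat.lt_succ_iff.mp h') (le_trans (Nat.le_succ k) hkn))
          (le_of_lt (hamono k (Nat.lt_of_succ_le hkn)))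
      · have : j = k + 1 := le_antisymm hjk h'
        simp [this]
  have subIcc : ∀ j, j < n → Set.Icc (a j) (a (j + 1)) ⊆ Set.Icc (0:ℝ) 1 := by
    intro j hj
    apply Set.Icc_subset_Icc
    · rw [← ha0]; exact amono 0 j (Nat.zero_le j) (le_of_lt hj)
    · rw [← han]; exact amono (j + 1) n hj le_rfl
  -- g preserves each partition interval
  have gmem : ∀ j, j < n → ∀ y ∈ Set.Icc (a j) (a (j + 1)),
      g y ∈ Set.Icc (a j) (a (j + 1)) := by
    intro j hj y hy
    have hhy := (hbij j hj).mapsTo hy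
    rw [hg]
    constructor <;> nlinarith [hy.1, hy.2, hhy.1, hhy.2]
  -- g maps [0,1] to [0,1]
  have gmaps : ∀ y ∈ Set.Icc (0:ℝ) 1, g y ∈ Set.Icc (0:ℝ) 1 := by
    intro y hy
    obtain ⟨j, hj, hyj⟩ := exists_interval_stmt9 n hn a ha0 han y hy
    exact subIcc j hj (gmem j hj y hyj)
  -- g is strictly monotone on [0,1]
  have gstrict : StrictMonoOn g (Set.Icc (0:ℝ) 1) := by
    intro u hu v hv huv
    have := hmono hu hv huv
    rw [hg, hg]
    nlinarith
  -- ginv is monotone on [0,1]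
  have ginvmono : ∀ u ∈ Set.Icc (0:ℝ) 1, ∀ v ∈ Set.Icc (0:ℝ) 1, u ≤ v → ginv u ≤ ginv v := by
    intro u hu v hv huv
    by_contra hcon
    push_neg at hcon
    have := gstrict (hmapsginv hv) (hmapsginv hu) hcon
    rw [hgrinv u hu, hgrinv v hv] at this
    linarith
  intro x hx
  obtain ⟨i, hi, hxi⟩ := exists_interval_stmt9 n hn a ha0 han x hx
  have hhx : h x ∈ Set.Icc (a i) (a (i + 1)) := (hbij i hi).mapsTo hxi
  have hgx : g x ∈ Set.Icc (a i) (a (i + 1)) := gmem i hi x hxi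
  have hx01 : x ∈ Set.Icc (0:ℝ) 1 := hx
  have hhx01 : h x ∈ Set.Icc (0:ℝ) 1 := subIcc i hi hhx
  have hgx01 : g x ∈ Set.Icc (0:ℝ) 1 := subIcc i hi hgx
  have hτ1x : τ₁ x ∈ Set.Icc (0:ℝ) 1 := hmapsτ₁ hx01
  have hτ1hx : τ₁ (h x) ∈ Set.Icc (0:ℝ) 1 := hmapsτ₁ hhx01
  have hτ1gx : τ₁ (g x) ∈ Set.Icc (0:ℝ) 1 := hmapsτ₁ hgx01
  have hτ2x : τ₂ x ∈ Set.Icc (0:ℝ) 1 := by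
    rw [hconj x hx01]; exact hmapsinv hτ1hx
  -- affinity: τ₁ (g x) = α τ₁ x + (1 - α) τ₁ (h x)
  obtain ⟨m, b, hmb⟩ := haff i hi
  have e1 : τ₁ (g x) = α * τ₁ x + (1 - α) * τ₁ (h x) := by
    rw [hmb _ hgx, hmb _ hxi, hmb _ hhx, hg]; ring
  -- key: h (τ₁ x) ≤ τ₁ (h x)
  have hkey : h (τ₁ x) ≤ τ₁ (h x) := by
    have h1 : τ₁ x ≤ τ₂ x := hle x hx01
    have h2 : τ₂ x = hinv (τ₁ (h x)) := hconj x hx01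
    have h3 : h (τ₁ x) ≤ h (hinv (τ₁ (h x))) := by
      apply hmono.monotoneOn hτ1x (hmapsinv hτ1hx)
      rw [← h2]; exact h1
    rwa [hrinv _ hτ1hx] at h3
  -- τ₂ value under h: h (τ₂ x) = τ₁ (h x)
  have hτ2h : h (τ₂ x) = τ₁ (h x) := by
    rw [hconj x hx01, hrinv _ hτ1hx]
  constructor
  · -- τ₁ x ≤ τ x
    have hgle : g (τ₁ x) ≤ τ₁ (g x) := by
      rw [e1, hg (τ₁ x)]; nlinarith [hkey]
    calc τ₁ x = ginv (g (τ₁ x)) := (hglinv _ hτ1x).symm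
      _ ≤ ginv (τ₁ (g x)) := ginvmono _ (gmaps _ hτ1x) _ hτ1gx hgle
      _ = τ x := (hτ x hx).symm
  · -- τ x ≤ τ₂ x
    have hgle : τ₁ (g x) ≤ g (τ₂ x) := by
      rw [e1, hg (τ₂ x), hτ2h]
      have := hle x hx01
      nlinarith
    calc τ x = ginv (τ₁ (g x)) := hτ x hx
      _ ≤ ginv (g (τ₂ x)) := ginvmono _ hτ1gx _ (gmaps _ hτ2x) hgle
      _ = τ₂ x := hglinv _ hτ2x

end
end

section
/- Let τ₁(x) = (4/3)x on [0,3/8], 4x−1 on [3/8,1/2], −4x+3 on [1/2,5/8], −(4/3)x+4/3 on [5/8,1], and τ₂(x) = 3x on [0,1/6], (3/2)x+1/4 on [1/6,1/2], −(3/2)x+7/4 on [1/2,5/6], −3x+3 on [5/6,1]. Then there is no measurable map η : [0,1] → [0,1] with η(x) ∈ {τ₁(x), τ₂(x)} for every x that preserves Lebesgue measure and is piecewise C¹ with two monotone onto branches meeting at 1/2. -/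
open MeasureTheory Set

noncomputable section

/-- The upper map τ₂ of Example 1. -/
def tau2 : ℝ → ℝ := fun x =>
  if x < 1/6 then 3 * x
  else if x < 1/2 then (3/2) * x + 1/4
  else if x < 5/6 then -(3/2) * x + 7/4
  else -3 * x + 3

/-- There is no selection η with η(x) ∈ {τ₁(x), τ₂(x)} for every x ∈ [0,1] that is
piecewise C¹ with two monotone onto branches meeting at 1/2 and preserves Lebesgue
measure. -/
theorem stmt15 :
    ¬ ∃ η : ℝ → ℝ, Measurable η ∧
      (∀ x ∈ Set.Icc (0:ℝ) 1, η x = tau1 x ∨ η x = tau2 x) ∧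
      (∀ A : Set ℝ, MeasurableSet A → A ⊆ Set.Icc (0:ℝ) 1 →
        volume (Set.Icc (0:ℝ) 1 ∩ η ⁻¹' A) = volume A) ∧
      StrictMonoOn η (Set.Icc 0 (1/2)) ∧ StrictAntiOn η (Set.Icc (1/2) 1) ∧
      η '' Set.Icc (0:ℝ) (1/2) = Set.Icc (0:ℝ) 1 ∧
      η '' Set.Icc (1/2 : ℝ) 1 = Set.Icc (0:ℝ) 1 ∧
      (∃ (s : Finset ℝ) (η' : ℝ → ℝ),
        ∀ x ∈ Set.Icc (0:ℝ) 1 \ (s : Set ℝ), HasDerivAt η (η' x) x) := by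
  rintro ⟨η, hmeas, hsel, hpres, hmono, hanti, himg1, himg2, -⟩
  -- preimages of 1/4 on each branch
  obtain ⟨a, ha, hηa⟩ : ∃ a ∈ Icc (0:ℝ) (1/2), η a = 1/4 := by
    have h14 : (1/4:ℝ) ∈ Icc (0:ℝ) 1 := by norm_num
    rw [← himg1] at h14
    obtain ⟨a, ha, h⟩ := h14
    exact ⟨a, ha, h⟩
  obtain ⟨b, hb, hηb⟩ : ∃ b ∈ Icc (1/2:ℝ) 1, η b = 1/4 := by
    have h14 : (1/4:ℝ) ∈ Icc (0:ℝ) 1 := by norm_num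
    rw [← himg2] at h14
    obtain ⟨b, hb, h⟩ := h14
    exact ⟨b, hb, h⟩
  -- pin down a
  have haval : a = 3/16 ∨ a = 1/12 := by
    have ha01 : a ∈ Icc (0:ℝ) 1 := ⟨ha.1, by linarith [ha.2]⟩
    rcases hsel a ha01 with h | h
    · rw [h] at hηa
      unfold tau1 at hηa
      split_ifs at hηa with h1 h2 h3
      · left; linarith
      · exfalso; linarith
      · exfalso; linarith [ha.2]
      · exfalso; push_neg at h1 h2; linarith [ha.2]
    · rw [h] at hηa
      unfold tau2 at hηa
      split_ifs at hηa with h1 h2 h3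
      · right; linarith
      · exfalso; push_neg at h1; linarith
      · exfalso; linarith [ha.2]
      · exfalso; push_neg at h2; linarith [ha.2]
  -- pin down b
  have hbval : b = 13/16 ∨ b = 11/12 := by
    have hb01 : b ∈ Icc (0:ℝ) 1 := ⟨by linarith [hb.1], hb.2⟩
    rcases hsel b hb01 with h | h
    · rw [h] at hηb
      unfold tau1 at hηb
      split_ifs at hηb with h1 h2 h3
      · exfalso; linarith [hb.1]
      · exfalso; linarith [hb.1]
      · exfalso; linarith [hb.1]
      · left; linarith
    · rw [h] at hηb
      unfold tau2 at hηb
      split_ifs at hηb with h1 h2 h3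
      · exfalso; linarith [hb.1]
      · exfalso; linarith [hb.1]
      · exfalso; push_neg at h2; linarith
      · right; linarith
  have ha12 : a < 1/2 := by rcases haval with h | h <;> rw [h] <;> norm_num
  have hb12 : (1/2:ℝ) < b := by rcases hbval with h | h <;> rw [h] <;> norm_num
  -- η 0 = 0 and η 1 = 0
  have hη0 : η 0 = 0 := by
    rcases hsel 0 (by norm_num) with h | h <;> rw [h] <;> norm_num [tau1, tau2]
  have hη1 : η 1 = 0 := by
    rcases hsel 1 (by norm_num) with h | h <;> rw [h] <;> norm_num [tau1, tau2]
  -- the preimage set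
  have hS : Icc (0:ℝ) 1 ∩ η ⁻¹' (Icc 0 (1/4)) = Icc 0 a ∪ Icc b 1 := by
    ext x
    simp only [mem_inter_iff, mem_preimage, mem_Icc, mem_union]
    constructor
    · rintro ⟨⟨hx0, hx1⟩, hηx0, hηx4⟩
      by_cases hx : x ≤ 1/2
      · left
        refine ⟨hx0, ?_⟩
        by_contra hc
        push_neg at hc
        have := hmono ha ⟨hx0, hx⟩ hc
        linarith
      · right
        push_neg at hx
        refine ⟨?_, hx1⟩
        by_contra hc
        push_neg at hc
        have := hanti ⟨hx.le, hx1⟩ hb hc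
        linarith
    · rintro (⟨hx0, hxa⟩ | ⟨hbx, hx1⟩)
      · have hx12 : x ≤ 1/2 := by linarith
        refine ⟨⟨hx0, by linarith⟩, ?_, ?_⟩
        · rcases eq_or_lt_of_le hx0 with h | h
          · rw [← h, hη0]
          · exact le_of_lt (by simpa [hη0] using hmono (by norm_num) ⟨hx0, hx12⟩ h)
        · rcases eq_or_lt_of_le hxa with h | h
          · rw [h, hηa]
          · exact le_of_lt (by simpa [hηa] using hmono ⟨hx0, hx12⟩ ha h)
      · have hx12 : (1/2:ℝ) ≤ x := by linarith
        refine ⟨⟨by linarith, hx1⟩, ?_, ?_⟩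
        · rcases eq_or_lt_of_le hx1 with h | h
          · rw [h, hη1]
          · exact le_of_lt (by simpa [hη1] using hanti ⟨hx12, hx1⟩ (by norm_num) h)
        · rcases eq_or_lt_of_le hbx with h | h
          · rw [← h, hηb]
          · exact le_of_lt (by simpa [hηb] using hanti hb ⟨hx12, hx1⟩ h)
  -- measure preservation applied to [0,1/4]
  have hvol := hpres (Icc 0 (1/4)) measurableSet_Icc
    (Icc_subset_Icc le_rfl (by norm_num))
  rw [hS] at hvol
  have hdisj : Disjoint (Icc (0:ℝ) a) (Icc b 1) := by
    rw [Set.disjoint_left]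
    rintro x ⟨_, hxa⟩ ⟨hbx, _⟩
    linarith
  rw [measure_union hdisj measurableSet_Icc, Real.volume_Icc, Real.volume_Icc,
    Real.volume_Icc, ← ENNReal.ofReal_add (by linarith [ha.1]) (by linarith [hb.2])] at hvol
  have hre : a - 0 + (1 - b) = 1/4 - 0 :=
    (ENNReal.ofReal_eq_ofReal_iff (by linarith [ha.1, hb.2]) (by norm_num)).1 hvol
  rcases haval with h | h <;> rcases hbval with h' | h' <;> rw [h, h'] at hre <;> norm_num at hre

end
end
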